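/- arXiv:1710.11064 — 2 statements merged into one kernel-verified Lean document; each statement's English description precedes it below -/
import Mathlib

section
/- For a sequence of random graphs G_n on vertex sets V_n with |V_n| → ∞, in which the degree random variables are exchangeable in pairs (i.e., (D_{n,k}, D_{n,ℓ}) has the same distribution as (D_{n,1}, D_{n,2}) for all k ≠ ℓ), the fraction P_n(d) of nodes with degree d satisfies P_n(d) → L(d) in probability for a constant L(d) if and only if P(D_{n,1} = d) → L(d) and Cov[1{D_{n,1}=d}, 1{D_{n,2}=d}] → 0. -/
/-!
Let `P n` be the fraction of nodes of degree `d`. Being `[0, 1]`-valued, `P n` converges to `L` in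
measure iff it does so in `L²` (Vitali), i.e. iff `𝔼[(P n - L)²] = Var[P n] + (𝔼[P n] - L)² → 0`.
Exchangeability in pairs gives `𝔼[P n] = ℙ(D n 0 = d)` and
`Var[P n] = (1 - 1 / V n) * Cov[1{D n 0 = d}, 1{D n 1 = d}] + Var[1{D n 0 = d}] / V n`,
whose last term vanishes as `V n → ∞`.
-/

open MeasureTheory ProbabilityTheory Filter Topology
open scoped ENNReal

lemma tendsto_add_nhds_zero_iff_of_nonneg {α : Type*} {l : Filter α} {f g : α → ℝ}
    (hf : ∀ a, 0 ≤ f a) (hg : ∀ a, 0 ≤ g a) :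
    Tendsto (fun a => f a + g a) l (𝓝 0) ↔ Tendsto f l (𝓝 0) ∧ Tendsto g l (𝓝 0) := by
  refine ⟨fun h => ⟨?_, ?_⟩, fun h => by simpa using h.1.add h.2⟩
  · exact squeeze_zero hf (fun a => le_add_of_nonneg_right (hg a)) h
  · exact squeeze_zero hg (fun a => le_add_of_nonneg_left (hf a)) h

lemma tendsto_sub_sq_nhds_zero_iff {α : Type*} {l : Filter α} {f : α → ℝ} {c : ℝ} :
    Tendsto (fun a => (f a - c) ^ 2) l (𝓝 0) ↔ Tendsto f l (𝓝 c) := by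
  refine ⟨fun h => ?_, fun h => by simpa using (h.sub_const c).pow 2⟩
  rw [tendsto_iff_norm_sub_tendsto_zero]
  have hsqrt := (Real.continuous_sqrt.tendsto 0).comp h
  simpa [Function.comp_def, Real.sqrt_sq_eq_abs] using hsqrt

lemma tendsto_mul_add_nhds_zero_iff {α : Type*} {l : Filter α} {a b c : α → ℝ}
    (ha : Tendsto a l (𝓝 1)) (hb : Tendsto b l (𝓝 0)) :
    Tendsto (fun x => a x * c x + b x) l (𝓝 0) ↔ Tendsto c l (𝓝 0) := by
  refine ⟨fun h => ?_, fun h => by simpa using (ha.mul h).add hb⟩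
  have hquot := (h.sub hb).div ha one_ne_zero
  rw [sub_zero, zero_div] at hquot
  refine hquot.congr' ?_
  filter_upwards [ha.eventually_ne one_ne_zero] with x hx
  simp only [Pi.div_apply, add_sub_cancel_right, mul_div_cancel_left₀ _ hx]

lemma abs_sum_div_card_le {ι : Type*} {s : Finset ι} {f : ι → ℝ} {C : ℝ} (hs : s.Nonempty)
    (hf : ∀ i ∈ s, |f i| ≤ C) : |(∑ i ∈ s, f i) / s.card| ≤ C := by
  rw [abs_div, Nat.abs_cast, div_le_iff₀ (by simpa using hs.card_pos)]
  calc |∑ i ∈ s, f i| ≤ ∑ i ∈ s, |f i| := Finset.abs_sum_le_sum_abs f s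
    _ ≤ C * s.card := by simpa [mul_comm] using Finset.sum_le_card_nsmul s _ C hf

section Convergence

variable {Ω : Type*} [MeasurableSpace Ω] {μ : Measure Ω}

lemma unifIntegrable_of_forall_norm_le {ι β : Type*} [NormedAddCommGroup β] {p : ℝ≥0∞}
    (hp : 1 ≤ p) (hp' : p ≠ ∞) {f : ι → Ω → β} (hf : ∀ i, AEStronglyMeasurable (f i) μ)
    {C : ℝ} (hC : ∀ i x, ‖f i x‖ ≤ C) : UnifIntegrable f p μ := by
  refine unifIntegrable_of hp hp' hf fun _ _ => ⟨C.toNNReal + 1, fun i => ?_⟩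
  have hempty : {x | C.toNNReal + 1 ≤ ‖f i x‖₊} = ∅ := by
    ext x
    simp only [Set.mem_ofPred_eq, Set.mem_empty_iff_false, iff_false, not_le, ← NNReal.coe_lt_coe,
      coe_nnnorm, NNReal.coe_add, NNReal.coe_one]
    linarith [hC i x, C.le_coe_toNNReal]
  simp [hempty]

lemma eLpNorm_two_eq_ofReal_sqrt {f : Ω → ℝ} (hf : MemLp f 2 μ) :
    eLpNorm f 2 μ = ENNReal.ofReal √(∫ ω, f ω ^ 2 ∂μ) := by
  rw [hf.eLpNorm_eq_integral_rpow_norm two_ne_zero ENNReal.ofNat_ne_top, Real.sqrt_eq_rpow]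
  norm_num

lemma tendsto_eLpNorm_two_iff_tendsto_integral_sq {ι : Type*} {l : Filter ι} {f : ι → Ω → ℝ}
    (hf : ∀ i, MemLp (f i) 2 μ) :
    Tendsto (fun i => eLpNorm (f i) 2 μ) l (𝓝 0) ↔
      Tendsto (fun i => ∫ ω, f i ω ^ 2 ∂μ) l (𝓝 0) := by
  simp_rw [fun i => eLpNorm_two_eq_ofReal_sqrt (hf i)]
  constructor
  · intro h
    have h' := ((ENNReal.tendsto_toReal ENNReal.zero_ne_top).comp h).pow 2
    refine (h'.congr fun i => ?_).trans (by simp)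
    simp [Real.sq_sqrt (integral_nonneg fun ω => sq_nonneg (f i ω))]
  · intro h
    have hcont : Tendsto (fun x : ℝ => ENNReal.ofReal √x) (𝓝 0) (𝓝 0) :=
      (ENNReal.continuous_ofReal.comp Real.continuous_sqrt).tendsto' 0 0 (by simp)
    exact hcont.comp h

lemma tendstoInMeasure_iff_tendsto_integral_sq [IsFiniteMeasure μ] {f : ℕ → Ω → ℝ} {g : Ω → ℝ}
    (hf : ∀ n, AEStronglyMeasurable (f n) μ) {C : ℝ} (hC : ∀ n ω, |f n ω| ≤ C)
    (hg : MemLp g 2 μ) :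
    TendstoInMeasure μ f atTop g ↔
      Tendsto (fun n => ∫ ω, (f n ω - g ω) ^ 2 ∂μ) atTop (𝓝 0) := by
  have hfL : ∀ n, MemLp (f n) 2 μ := fun n => MemLp.of_bound (hf n) C (ae_of_all μ (hC n))
  rw [← tendsto_eLpNorm_two_iff_tendsto_integral_sq (f := fun n ω => f n ω - g ω)
      fun n => (hfL n).sub hg]
  have hui := unifIntegrable_of_forall_norm_le one_le_two ENNReal.ofNat_ne_top hf hC
  exact (and_iff_left hui).symm.trans
    (tendstoInMeasure_iff_tendsto_Lp_finite one_le_two ENNReal.ofNat_ne_top hfL hg)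

lemma integral_sub_const_sq [IsProbabilityMeasure μ] {X : Ω → ℝ} (hX : MemLp X 2 μ) (c : ℝ) :
    ∫ ω, (X ω - c) ^ 2 ∂μ = Var[X; μ] + (μ[X] - c) ^ 2 := by
  have hXc : MemLp (fun ω => X ω - c) 2 μ := hX.sub (memLp_const c)
  rw [← variance_sub_const hX.aestronglyMeasurable c, variance_eq_sub hXc,
    integral_sub (hX.integrable one_le_two) (integrable_const c)]
  simp

end Convergence

section Exchangeable

variable {Ω α : Type*} [MeasurableSpace Ω] [MeasurableSpace α]

def IsPairExchangeable (Y : ℕ → Ω → α) (N : ℕ) (μ : Measure Ω) : Prop :=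
  ∀ k l, k < N → l < N → k ≠ l →
    IdentDistrib (fun ω => (Y k ω, Y l ω)) (fun ω => (Y 0 ω, Y 1 ω)) μ μ

namespace IsPairExchangeable

variable {μ : Measure Ω} {N : ℕ}

lemma comp {β : Type*} [MeasurableSpace β] {Y : ℕ → Ω → α} (h : IsPairExchangeable Y N μ)
    {f : α → β} (hf : Measurable f) : IsPairExchangeable (fun k ω => f (Y k ω)) N μ :=
  fun k l hk hl hkl => (h k l hk hl hkl).comp (hf.prodMap hf)

lemma identDistrib {Y : ℕ → Ω → α} (h : IsPairExchangeable Y N μ) (hN : 1 < N) {k : ℕ}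
    (hk : k < N) : IdentDistrib (Y k) (Y 0) μ μ := by
  rcases eq_or_ne k 0 with rfl | hk0
  · exact (h 0 1 hk hN zero_ne_one).comp measurable_fst
  · exact (h k 0 hk (by omega) hk0).comp measurable_fst

variable {Y : ℕ → Ω → ℝ}

lemma integral_eq (h : IsPairExchangeable Y N μ) (hN : 1 < N) {k : ℕ} (hk : k < N) :
    μ[Y k] = μ[Y 0] :=
  (h.identDistrib hN hk).integral_eq

lemma covariance_eq (h : IsPairExchangeable Y N μ) {k l : ℕ} (hk : k < N) (hl : l < N)
    (hkl : k ≠ l) : cov[Y k, Y l; μ] = cov[Y 0, Y 1; μ] := by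
  have hN : 1 < N := by omega
  simp only [covariance, h.integral_eq hN hk, h.integral_eq hN hl, h.integral_eq hN hN]
  exact ((h k l hk hl hkl).comp (u := fun p : ℝ × ℝ => (p.1 - μ[Y 0]) * (p.2 - μ[Y 0]))
    (by fun_prop)).integral_eq

lemma integral_average (h : IsPairExchangeable Y N μ) (hN : 1 < N)
    (hY : Integrable (Y 0) μ) :
    ∫ ω, (∑ k ∈ Finset.range N, Y k ω) / N ∂μ = μ[Y 0] := by
  have hYk : ∀ k ∈ Finset.range N, Integrable (Y k) μ := fun k hk =>
    (h.identDistrib hN (Finset.mem_range.mp hk)).integrable_iff.mpr hY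
  rw [integral_div, integral_finsetSum _ hYk,
    Finset.sum_congr rfl fun k hk => h.integral_eq hN (Finset.mem_range.mp hk)]
  simp [show (N : ℝ) ≠ 0 by positivity]

lemma variance_sum [IsFiniteMeasure μ] (h : IsPairExchangeable Y N μ) (hN : 1 < N)
    (hY : MemLp (Y 0) 2 μ) :
    Var[fun ω => ∑ k ∈ Finset.range N, Y k ω; μ] =
      N * Var[Y 0; μ] + N * (N - 1) * cov[Y 0, Y 1; μ] := by
  have hYk : ∀ k ∈ Finset.range N, MemLp (Y k) 2 μ := fun k hk =>
    (h.identDistrib hN (Finset.mem_range.mp hk)).memLp_iff.mpr hY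
  have hcov : ∀ k ∈ Finset.range N, ∀ l ∈ Finset.range N, cov[Y k, Y l; μ] =
      cov[Y 0, Y 1; μ] + if k = l then Var[Y 0; μ] - cov[Y 0, Y 1; μ] else 0 := by
    intro k hk l hl
    rw [Finset.mem_range] at hk hl
    split_ifs with hkl
    · rw [← hkl, covariance_self (hYk k (Finset.mem_range.mpr hk)).aemeasurable,
        (h.identDistrib hN hk).variance_eq]
      ring
    · rw [h.covariance_eq hk hl hkl, add_zero]
  rw [variance_fun_sum' hYk, Finset.sum_congr rfl fun k hk => Finset.sum_congr rfl (hcov k hk)]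
  simp only [Finset.sum_add_distrib, Finset.sum_ite_eq, Finset.sum_ite_mem, Finset.inter_self,
    Finset.sum_const, Finset.card_range, nsmul_eq_mul]
  ring

lemma variance_average [IsFiniteMeasure μ] (h : IsPairExchangeable Y N μ) (hN : 1 < N)
    (hY : MemLp (Y 0) 2 μ) :
    Var[fun ω => (∑ k ∈ Finset.range N, Y k ω) / N; μ] =
      (1 - 1 / N) * cov[Y 0, Y 1; μ] + Var[Y 0; μ] / N := by
  simp_rw [div_eq_mul_inv _ (N : ℝ)]
  rw [variance_mul_const, h.variance_sum hN hY]
  field_simp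
  ring

end IsPairExchangeable

end Exchangeable

theorem tendstoInMeasure_average_iff_of_isPairExchangeable {Ω : Type*} [MeasurableSpace Ω]
    {μ : Measure Ω} [IsProbabilityMeasure μ] {N : ℕ → ℕ} (hN : ∀ n, 1 < N n)
    (hNtop : Tendsto N atTop atTop) {Y : ℕ → ℕ → Ω → ℝ}
    (hY : ∀ n, IsPairExchangeable (Y n) (N n) μ) (hmeas : ∀ n k, AEStronglyMeasurable (Y n k) μ)
    {C : ℝ} (hC : ∀ n k ω, |Y n k ω| ≤ C) (L : ℝ) :
    TendstoInMeasure μ (fun n ω => (∑ k ∈ Finset.range (N n), Y n k ω) / N n) atTop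
        (fun _ => L) ↔
      Tendsto (fun n => μ[Y n 0]) atTop (𝓝 L) ∧
        Tendsto (fun n => cov[Y n 0, Y n 1; μ]) atTop (𝓝 0) := by
  have hYL : ∀ n k, MemLp (Y n k) 2 μ := fun n k =>
    MemLp.of_bound (hmeas n k) C (ae_of_all μ (hC n k))
  have hA : ∀ n ω, |(∑ k ∈ Finset.range (N n), Y n k ω) / N n| ≤ C := fun n ω => by
    simpa using abs_sum_div_card_le (Finset.nonempty_range_iff.mpr (by have := hN n; omega))
      fun k _ => hC n k ω
  have hAmeas : ∀ n, AEStronglyMeasurable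
      (fun ω => (∑ k ∈ Finset.range (N n), Y n k ω) / N n) μ := fun n => by
    have := hmeas n
    fun_prop
  rw [tendstoInMeasure_iff_tendsto_integral_sq hAmeas hA (memLp_const L)]
  simp_rw [integral_sub_const_sq (MemLp.of_bound (hAmeas _) C (ae_of_all μ (hA _)))]
  rw [tendsto_add_nhds_zero_iff_of_nonneg (fun n => variance_nonneg _ _) (fun n => sq_nonneg _),
    and_comm, tendsto_sub_sq_nhds_zero_iff]
  have hNinv : Tendsto (fun n => 1 / (N n : ℝ)) atTop (𝓝 0) := by
    have hNr : Tendsto (fun n => (N n : ℝ)) atTop atTop := tendsto_natCast_atTop_atTop.comp hNtop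
    simpa [Pi.inv_def] using hNr.inv_tendsto_atTop
  have hvar_div : Tendsto (fun n => Var[Y n 0; μ] / N n) atTop (𝓝 0) := by
    refine squeeze_zero (fun n => div_nonneg (variance_nonneg _ _) (Nat.cast_nonneg _))
      (fun n => ?_) (by simpa using hNinv.const_mul (C ^ 2))
    have hvar : Var[Y n 0; μ] ≤ ((C - -C) / 2) ^ 2 :=
      variance_le_sq_of_bounded (ae_of_all μ fun ω => abs_le.mp (hC n 0 ω))
        (hmeas n 0).aemeasurable
    rw [div_eq_mul_inv]
    gcongr
    linarith
  refine and_congr (tendsto_congr fun n =>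
    (hY n).integral_average (hN n) ((hYL n 0).integrable one_le_two)) ?_
  rw [tendsto_congr fun n => (hY n).variance_average (hN n) (hYL n 0)]
  exact tendsto_mul_add_nhds_zero_iff (by simpa using hNinv.const_sub 1) hvar_div

/-- For a sequence of random graphs whose degree rvs are exchangeable in pairs,
with `|V_n| → ∞`, the fraction `P_n(d)` of nodes of degree `d` converges in probability to a
constant `L d` iff `P(D_{n,1} = d) → L d` and `Cov[1{D_{n,1}=d}, 1{D_{n,2}=d}] → 0`. -/
theorem stmt1 {Ω : Type*} [MeasurableSpace Ω] (μ : Measure Ω) [IsProbabilityMeasure μ]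
    (V : ℕ → ℕ) (hV : ∀ n, 2 ≤ V n) (hVtop : Tendsto V atTop atTop)
    (D : ℕ → ℕ → Ω → ℕ) (hDmeas : ∀ n k, Measurable (D n k))
    (hhom : ∀ n k l, k < V n → l < V n → k ≠ l →
      IdentDistrib (fun ω => (D n k ω, D n l ω)) (fun ω => (D n 0 ω, D n 1 ω)) μ μ)
    (d : ℕ) (L : ℝ) :
    TendstoInMeasure μ
        (fun n ω => (∑ k ∈ Finset.range (V n), if D n k ω = d then (1 : ℝ) else 0) / V n)
        atTop (fun _ => L) ↔
      (Tendsto (fun n => (μ {ω | D n 0 ω = d}).toReal) atTop (𝓝 L) ∧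
        Tendsto (fun n =>
            (∫ ω, (if D n 0 ω = d then (1 : ℝ) else 0) * (if D n 1 ω = d then (1 : ℝ) else 0) ∂μ)
              - (∫ ω, (if D n 0 ω = d then (1 : ℝ) else 0) ∂μ)
                * (∫ ω, (if D n 1 ω = d then (1 : ℝ) else 0) ∂μ))
          atTop (𝓝 0)) := by
  set X : ℕ → ℕ → Ω → ℝ := fun n k ω => if D n k ω = d then 1 else 0 with hX_def
  have hXmeas : ∀ n k, Measurable (X n k) := fun n k =>
    (measurable_of_countable (fun x => if x = d then (1 : ℝ) else 0)).comp (hDmeas n k)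
  have hXbound : ∀ n k ω, |X n k ω| ≤ 1 := by
    intro n k ω
    simp only [hX_def]
    split_ifs <;> norm_num
  have hXL : ∀ n k, MemLp (X n k) 2 μ := fun n k =>
    MemLp.of_bound (hXmeas n k).aestronglyMeasurable 1 (ae_of_all μ (hXbound n k))
  have hXexch : ∀ n, IsPairExchangeable (X n) (V n) μ := fun n =>
    IsPairExchangeable.comp (f := fun x => if x = d then (1 : ℝ) else 0) (hhom n)
      (measurable_of_countable _)
  rw [tendstoInMeasure_average_iff_of_isPairExchangeable hV hVtop hXexch
    (fun n k => (hXmeas n k).aestronglyMeasurable) hXbound L]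
  refine and_congr (tendsto_congr fun n => ?_)
    (tendsto_congr fun n => covariance_eq_sub (hXL n 0) (hXL n 1))
  have hind : X n 0 = {ω | D n 0 ω = d}.indicator 1 := by
    ext ω
    simp [hX_def, Set.indicator_apply]
  rw [hind, integral_indicator_one (measurableSet_eq_fun (hDmeas n 0) measurable_const),
    measureReal_def]
end

section
/- For i.i.d. Exp(λ) variables ξ_1,…,ξ_p and levels as above, as p → ∞ (with k ≤ k' fixed integers), P(S_p(u_p(x')) = k', S_p(u_p(x)) = k) converges to (e^{−kx}/k!) · ((e^{−x'} − e^{−x})^{k'−k}/(k'−k)!) · exp(−e^{−x'}), where x' ≤ x are fixed reals and u_p(y) = λ^{-1}(log p + y). -/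
/-!
At the levels `u' = u_p(x') ≤ u = u_p(x)` the cells `(-∞, u']`, `(u', u]`, `(u, ∞)` have
probabilities `q₀ = 1 - e^{-x'}/p`, `q₁ = (e^{-x'} - e^{-x})/p` and `q₂ = e^{-x}/p`, so by
independence the pair of exceedance counts is trinomial:
`P(S_p(u') = k', S_p(u) = k) = C(p,k') C(k',k) q₂^k q₁^(k'-k) q₀^(p-k')`.
Since `C(p,k') p^{-k'} → 1/k'!` and `(1 - e^{-x'}/p)^(p-k') → exp(-e^{-x'})`, this tends to the
stated limit.
-/

open MeasureTheory ProbabilityTheory Filter Topology Finset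

lemma tendsto_one_sub_div_pow_sub (a : ℝ) (m : ℕ) :
    Tendsto (fun n : ℕ => (1 - a / n) ^ (n - m)) atTop (𝓝 (Real.exp (-a))) := by
  have hbase : Tendsto (fun n : ℕ => 1 - a / n) atTop (𝓝 1) := by
    simpa using tendsto_const_nhds.sub (tendsto_const_div_atTop_nhds_zero_nat a)
  have hsplit : (fun n : ℕ => (1 - a / n) ^ n / (1 - a / n) ^ m) =ᶠ[atTop]
      fun n : ℕ => (1 - a / n) ^ (n - m) := by
    filter_upwards [eventually_ge_atTop m, hbase.eventually_ne one_ne_zero] with n hn hne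
    rw [pow_sub₀ _ hne hn, div_eq_mul_inv]
  refine Tendsto.congr' hsplit ?_
  have hexp : Tendsto (fun n : ℕ => (1 - a / n) ^ n) atTop (𝓝 (Real.exp (-a))) := by
    simpa only [neg_div, ← sub_eq_add_neg] using Real.tendsto_one_add_div_pow_exp (-a)
  have h := hexp.div (hbase.pow m) (by simp)
  rwa [one_pow, div_one] at h

theorem tendsto_choose_mul_choose_mul_pow (a b c : ℝ) {k k' : ℕ} (hk : k ≤ k') :
    Tendsto (fun n : ℕ => ((n.choose k' * k'.choose k : ℕ) : ℝ) *
        ((b / n) ^ k * (c / n) ^ (k' - k) * (1 - a / n) ^ (n - k')))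
      atTop (𝓝 (b ^ k / k.factorial * (c ^ (k' - k) / (k' - k).factorial) * Real.exp (-a))) := by
  have hchoose : Tendsto (fun n : ℕ => (n.choose k' : ℝ) * (1 / (n : ℝ)) ^ k') atTop
      (𝓝 (1 / k'.factorial)) := by
    have hone : Tendsto (fun n : ℕ => (n : ℝ) * (1 / n)) atTop (𝓝 1) :=
      tendsto_const_nhds.congr' <| by
        filter_upwards [eventually_ne_atTop 0] with n hn
        field_simp
    simpa using tendsto_choose_mul_pow_atTop k' hone
  have hlim := (hchoose.mul_const ((k'.choose k : ℝ) * (b ^ k * c ^ (k' - k)))).mul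
    (tendsto_one_sub_div_pow_sub a k')
  convert hlim using 2 with n
  · have hpow : (1 / (n : ℝ)) ^ k' = (1 / n) ^ k * (1 / n) ^ (k' - k) := by
      rw [← pow_add, Nat.add_sub_cancel' hk]
    rw [hpow, div_eq_mul_one_div b, div_eq_mul_one_div c]
    push_cast
    ring
  · rw [Nat.cast_choose ℝ hk]
    field_simp

lemma Finset.filter_eq_iff_of_subset {α : Type*} {s t : Finset α} {P : α → Prop}
    [DecidablePred P] (h : t ⊆ s) : s.filter P = t ↔ ∀ x ∈ s, (P x ↔ x ∈ t) := by
  constructor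
  · rintro rfl x hx
    simp [hx]
  · intro hP
    ext x
    rw [mem_filter]
    exact ⟨fun hx => (hP x hx.1).1 hx.2, fun hx => ⟨h hx, (hP x (h hx)).2 hx⟩⟩

section Exceedances

variable {Ω : Type*} {ξ : ℕ → Ω → ℝ}

-- `#(exceedances ξ p u ω)` is the paper's `S_p(u)`.
noncomputable def exceedances (ξ : ℕ → Ω → ℝ) (p : ℕ) (u : ℝ) (ω : Ω) : Finset ℕ :=
  (range p).filter fun ℓ => u < ξ ℓ ω

def levelCell (u' u : ℝ) (A' A : Finset ℕ) (ℓ : ℕ) : Set ℝ :=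
  if ℓ ∈ A then Set.Ioi u else if ℓ ∈ A' then Set.Ioc u' u else Set.Iic u'

lemma measurableSet_levelCell (u' u : ℝ) (A' A : Finset ℕ) (ℓ : ℕ) :
    MeasurableSet (levelCell u' u A' A ℓ) := by
  unfold levelCell
  split_ifs <;> measurability

lemma mem_levelCell_iff {u' u y : ℝ} {A' A : Finset ℕ} {ℓ : ℕ} (huu : u' ≤ u) (hA : A ⊆ A') :
    y ∈ levelCell u' u A' A ℓ ↔ (u' < y ↔ ℓ ∈ A') ∧ (u < y ↔ ℓ ∈ A) := by
  by_cases hℓ : ℓ ∈ A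
  · rw [levelCell, if_pos hℓ, Set.mem_Ioi]
    simp only [hℓ, hA hℓ, iff_true]
    exact ⟨fun h => ⟨huu.trans_lt h, h⟩, And.right⟩
  by_cases hℓ' : ℓ ∈ A'
  · rw [levelCell, if_neg hℓ, if_pos hℓ', Set.mem_Ioc]
    simp only [hℓ, hℓ', iff_true, iff_false, not_lt]
  · rw [levelCell, if_neg hℓ, if_neg hℓ', Set.mem_Iic]
    simp only [hℓ, hℓ', iff_false, not_lt]
    exact ⟨fun h => ⟨h, h.trans huu⟩, And.left⟩

lemma exceedances_subset_range (p : ℕ) (u : ℝ) (ω : Ω) : exceedances ξ p u ω ⊆ range p :=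
  filter_subset _ _

lemma exceedances_anti {p : ℕ} {u' u : ℝ} (huu : u' ≤ u) (ω : Ω) :
    exceedances ξ p u ω ⊆ exceedances ξ p u' ω :=
  monotone_filter_right _ fun _ _ h => huu.trans_lt h

lemma setOf_exceedances_eq_and_eq {p : ℕ} {u' u : ℝ} {A' A : Finset ℕ} (huu : u' ≤ u)
    (hA : A ⊆ A') (hA' : A' ⊆ range p) :
    {ω | exceedances ξ p u' ω = A' ∧ exceedances ξ p u ω = A}
      = ⋂ ℓ ∈ range p, ξ ℓ ⁻¹' levelCell u' u A' A ℓ := by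
  ext ω
  simp only [Set.mem_ofPred_eq, Set.mem_iInter, Set.mem_preimage, exceedances,
    filter_eq_iff_of_subset hA', filter_eq_iff_of_subset (hA.trans hA'),
    mem_levelCell_iff huu hA, ← forall₂_and]

variable [MeasurableSpace Ω] {μ : Measure Ω}

lemma ProbabilityTheory.iIndepFun.measureReal_inter_preimage_eq_mul {ι β : Type*}
    [MeasurableSpace β] {f : ι → Ω → β} (hf : iIndepFun f μ) (S : Finset ι) {sets : ι → Set β}
    (hsets : ∀ i ∈ S, MeasurableSet (sets i)) :
    μ.real (⋂ i ∈ S, f i ⁻¹' sets i) = ∏ i ∈ S, μ.real (f i ⁻¹' sets i) := by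
  simp only [measureReal_def, hf.measure_inter_preimage_eq_mul S hsets, ENNReal.toReal_prod]

lemma measureReal_exceedances_eq_and_eq (hindep : iIndepFun ξ μ) {p : ℕ} {u' u q₀ q₁ q₂ : ℝ}
    {A' A : Finset ℕ} (huu : u' ≤ u) (hA : A ⊆ A') (hA' : A' ⊆ range p)
    (hq₀ : ∀ ℓ, μ.real (ξ ℓ ⁻¹' Set.Iic u') = q₀) (hq₁ : ∀ ℓ, μ.real (ξ ℓ ⁻¹' Set.Ioc u' u) = q₁)
    (hq₂ : ∀ ℓ, μ.real (ξ ℓ ⁻¹' Set.Ioi u) = q₂) :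
    μ.real {ω | exceedances ξ p u' ω = A' ∧ exceedances ξ p u ω = A}
      = q₂ ^ #A * q₁ ^ (#A' - #A) * q₀ ^ (p - #A') := by
  rw [setOf_exceedances_eq_and_eq huu hA hA',
    hindep.measureReal_inter_preimage_eq_mul _ fun ℓ _ => measurableSet_levelCell ..,
    ← prod_sdiff hA', ← prod_sdiff hA]
  have hcell₂ : ∀ ℓ ∈ A, μ.real (ξ ℓ ⁻¹' levelCell u' u A' A ℓ) = q₂ := fun ℓ hℓ => by
    rw [levelCell, if_pos hℓ, hq₂]
  have hcell₁ : ∀ ℓ ∈ A' \ A, μ.real (ξ ℓ ⁻¹' levelCell u' u A' A ℓ) = q₁ := fun ℓ hℓ => by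
    rw [Finset.mem_sdiff] at hℓ
    rw [levelCell, if_neg hℓ.2, if_pos hℓ.1, hq₁]
  have hcell₀ : ∀ ℓ ∈ range p \ A', μ.real (ξ ℓ ⁻¹' levelCell u' u A' A ℓ) = q₀ := fun ℓ hℓ => by
    rw [Finset.mem_sdiff] at hℓ
    rw [levelCell, if_neg (fun h => hℓ.2 (hA h)), if_neg hℓ.2, hq₀]
  rw [prod_congr rfl hcell₀, prod_congr rfl hcell₁, prod_congr rfl hcell₂, prod_const, prod_const,
    prod_const, card_sdiff_of_subset hA, card_sdiff_of_subset hA', card_range]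
  ring

lemma measureReal_card_exceedances_eq [IsFiniteMeasure μ] (hmeas : ∀ ℓ, Measurable (ξ ℓ))
    (hindep : iIndepFun ξ μ) {p k k' : ℕ} {u' u q₀ q₁ q₂ : ℝ} (huu : u' ≤ u)
    (hq₀ : ∀ ℓ, μ.real (ξ ℓ ⁻¹' Set.Iic u') = q₀) (hq₁ : ∀ ℓ, μ.real (ξ ℓ ⁻¹' Set.Ioc u' u) = q₁)
    (hq₂ : ∀ ℓ, μ.real (ξ ℓ ⁻¹' Set.Ioi u) = q₂) :
    μ.real {ω | #(exceedances ξ p u' ω) = k' ∧ #(exceedances ξ p u ω) = k}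
      = (p.choose k' * k'.choose k : ℕ) * (q₂ ^ k * q₁ ^ (k' - k) * q₀ ^ (p - k')) := by
  let F : Ω → (_ : Finset ℕ) × Finset ℕ := fun ω => ⟨exceedances ξ p u' ω, exceedances ξ p u ω⟩
  let Q := ((range p).powersetCard k').sigma fun A' => A'.powersetCard k
  have hmemQ {A' A : Finset ℕ} : ⟨A', A⟩ ∈ Q ↔ (A' ⊆ range p ∧ #A' = k') ∧ A ⊆ A' ∧ #A = k := by
    simp only [Q, mem_sigma, mem_powersetCard]
  have hfiber {A' A : Finset ℕ} :
      F ⁻¹' {⟨A', A⟩} = {ω | exceedances ξ p u' ω = A' ∧ exceedances ξ p u ω = A} := by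
    ext ω
    simp [F]
  have hevent : {ω | #(exceedances ξ p u' ω) = k' ∧ #(exceedances ξ p u ω) = k} = F ⁻¹' Q := by
    ext ω
    simp only [Set.mem_ofPred_eq, Set.mem_preimage, mem_coe, F, hmemQ,
      exceedances_subset_range, exceedances_anti huu, true_and]
  have hfiber_measurable : ∀ q ∈ Q, MeasurableSet (F ⁻¹' {q}) := by
    rintro ⟨A', A⟩ hq
    rw [hmemQ] at hq
    rw [hfiber, setOf_exceedances_eq_and_eq huu hq.2.1 hq.1.1]
    exact (range p).measurableSet_biInter fun ℓ _ => hmeas ℓ (measurableSet_levelCell ..)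
  have hfiber_measure : ∀ q ∈ Q,
      μ.real (F ⁻¹' {q}) = q₂ ^ k * q₁ ^ (k' - k) * q₀ ^ (p - k') := by
    rintro ⟨A', A⟩ hq
    rw [hmemQ] at hq
    rw [hfiber, measureReal_exceedances_eq_and_eq hindep huu hq.2.1 hq.1.1 hq₀ hq₁ hq₂,
      hq.1.2, hq.2.2]
  have hcardQ : #Q = p.choose k' * k'.choose k := by
    rw [card_sigma, sum_congr rfl fun A' hA' => by
      rw [card_powersetCard, (mem_powersetCard.1 hA').2], sum_const, card_powersetCard,
      card_range, smul_eq_mul]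
  rw [hevent, ← sum_measureReal_preimage_singleton Q hfiber_measurable,
    sum_congr rfl hfiber_measure, sum_const, nsmul_eq_mul, hcardQ]

end Exceedances

section CDF

variable {Ω : Type*} [MeasurableSpace Ω] {μ : Measure Ω} {f : Ω → ℝ} {F : ℝ → ℝ}

lemma measureReal_preimage_Ioi_of_cdf [IsProbabilityMeasure μ] (hf : Measurable f)
    (hF : ∀ y, μ.real {ω | f ω ≤ y} = F y) (u : ℝ) : μ.real (f ⁻¹' Set.Ioi u) = 1 - F u := by
  rw [← Set.compl_Iic, Set.preimage_compl, probReal_compl_eq_one_sub (hf measurableSet_Iic), ← hF]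
  rfl

lemma measureReal_preimage_Ioc_of_cdf [IsFiniteMeasure μ] (hf : Measurable f)
    (hF : ∀ y, μ.real {ω | f ω ≤ y} = F y) {u' u : ℝ} (huu : u' ≤ u) :
    μ.real (f ⁻¹' Set.Ioc u' u) = F u - F u' := by
  rw [← Set.Iic_sdiff_Iic, Set.preimage_sdiff,
    measureReal_sdiff (Set.preimage_mono (Set.Iic_subset_Iic.2 huu)) (hf measurableSet_Iic),
    ← hF, ← hF]
  rfl

end CDF

lemma exp_neg_mul_max_inv_mul_log_add {lam : ℝ} (hlam : 0 < lam) {p : ℕ} (hp : 0 < p) {y : ℝ}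
    (hy : 0 ≤ Real.log p + y) :
    Real.exp (-(lam * max (lam⁻¹ * (Real.log p + y)) 0)) = Real.exp (-y) / p := by
  have hp' : (0 : ℝ) < p := Nat.cast_pos.2 hp
  rw [max_eq_left (by positivity), mul_inv_cancel_left₀ hlam.ne', neg_add, Real.exp_add,
    Real.exp_neg (Real.log p), Real.exp_log hp', div_eq_inv_mul]

/-- For i.i.d. `Exp(λ)` rvs, levels `u_p(y) = λ⁻¹(log p + y)` with fixed reals
`x' ≤ x` and fixed integers `k ≤ k'`, as `p → ∞`,
`P(S_p(u_p(x')) = k', S_p(u_p(x)) = k) →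
  (e^{-kx}/k!) ((e^{-x'} - e^{-x})^{k'-k}/(k'-k)!) exp(-e^{-x'})`. -/
theorem stmt13 {Ω : Type*} [MeasurableSpace Ω] (μ : Measure Ω) [IsProbabilityMeasure μ]
    (lam : ℝ) (hlam : 0 < lam) (ξ : ℕ → Ω → ℝ) (hmeas : ∀ i, Measurable (ξ i))
    (hindep : iIndepFun ξ μ)
    (hcdf : ∀ i (y : ℝ), (μ {ω | ξ i ω ≤ y}).toReal = 1 - Real.exp (-(lam * max y 0)))
    (x x' : ℝ) (hxx : x' ≤ x) (k k' : ℕ) (hk : k ≤ k') :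
    Tendsto (fun p : ℕ =>
        (μ {ω | ((Finset.range p).filter fun ℓ => lam⁻¹ * (Real.log p + x') < ξ ℓ ω).card = k' ∧
                ((Finset.range p).filter fun ℓ => lam⁻¹ * (Real.log p + x) < ξ ℓ ω).card
                  = k}).toReal)
      atTop
      (𝓝 (Real.exp (-(k * x)) / k.factorial
            * ((Real.exp (-x') - Real.exp (-x)) ^ (k' - k) / (k' - k).factorial)
            * Real.exp (-Real.exp (-x')))) := by
  set a := Real.exp (-x')
  set b := Real.exp (-x)
  rw [show Real.exp (-(k * x)) = b ^ k by rw [← Real.exp_nat_mul, mul_neg]]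
  refine (tendsto_choose_mul_choose_mul_pow a b (a - b) hk).congr' ?_
  have hlevel : ∀ᶠ p : ℕ in atTop, -x' ≤ Real.log p :=
    (Real.tendsto_log_atTop.comp tendsto_natCast_atTop_atTop).eventually_ge_atTop (-x')
  filter_upwards [eventually_gt_atTop 0, hlevel] with p hp hlog
  let F : ℝ → ℝ := fun y => 1 - Real.exp (-(lam * max y 0))
  have hF : ∀ i y, μ.real {ω | ξ i ω ≤ y} = F y := hcdf
  have hF_level {y : ℝ} (hy : x' ≤ y) : F (lam⁻¹ * (Real.log p + y)) = 1 - Real.exp (-y) / p := by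
    simp only [F, exp_neg_mul_max_inv_mul_log_add hlam hp (by linarith : 0 ≤ Real.log p + y)]
  have huu : lam⁻¹ * (Real.log p + x') ≤ lam⁻¹ * (Real.log p + x) := by gcongr
  refine (measureReal_card_exceedances_eq (q₀ := 1 - a / p) (q₁ := (a - b) / p) (q₂ := b / p)
    hmeas hindep huu (fun ℓ => (hF ℓ _).trans (hF_level le_rfl)) (fun ℓ => ?_) (fun ℓ => ?_)).symm
  · rw [measureReal_preimage_Ioc_of_cdf (hmeas ℓ) (hF ℓ) huu, hF_level hxx, hF_level le_rfl]
    ring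
  · rw [measureReal_preimage_Ioi_of_cdf (hmeas ℓ) (hF ℓ), hF_level hxx]
    ring
end
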